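/- Let T be a bounded linear operator on an infinite-dimensional complex Banach space. T satisfies property (Z_{E_a}) if and only if T satisfies property (k) (i.e. σ(T)\σ_W(T) = E(T)) and E_a(T) = E(T). -/

import Mathlib

open Set

noncomputable section

namespace ZProps

variable {X : Type*} [NormedAddCommGroup X] [NormedSpace ℂ X] [CompleteSpace X]

/-- The spectrum of `T`. -/
def sp (T : X →L[ℂ] X) : Set ℂ := spectrum ℂ T

/-- The approximate point spectrum: `λ` such that `T - λ` is not bounded below. -/
def spa (T : X →L[ℂ] X) : Set ℂ :=
  {l | ¬ ∃ c > (0:ℝ), ∀ x : X, c * ‖x‖ ≤ ‖(T - l • 1) x‖}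

/-- The point spectrum (eigenvalues). -/
def spp (T : X →L[ℂ] X) : Set ℂ := {l | ∃ x : X, x ≠ 0 ∧ T x = l • x}

/-- Eigenvalues of finite multiplicity. -/
def spp0 (T : X →L[ℂ] X) : Set ℂ :=
  {l | l ∈ spp T ∧ FiniteDimensional ℂ (LinearMap.ker ((T - l • 1 : X →L[ℂ] X) : X →ₗ[ℂ] X))}

/-- Isolated points of a subset of `ℂ`. -/
def iso (A : Set ℂ) : Set ℂ :=
  {l | l ∈ A ∧ ∃ ε > (0:ℝ), ∀ μ ∈ A, μ ≠ l → ε ≤ ‖μ - l‖}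

def Ea (T : X →L[ℂ] X) : Set ℂ := iso (spa T) ∩ spp T
def Ea0 (T : X →L[ℂ] X) : Set ℂ := iso (spa T) ∩ spp0 T
def Efull (T : X →L[ℂ] X) : Set ℂ := iso (sp T) ∩ spp T
def E0 (T : X →L[ℂ] X) : Set ℂ := iso (sp T) ∩ spp0 T

/-- Fredholm operator: finite-dimensional kernel, closed range of finite codimension. -/
def IsFredholmOp (S : X →L[ℂ] X) : Prop :=
  FiniteDimensional ℂ (LinearMap.ker (S : X →ₗ[ℂ] X)) ∧
  FiniteDimensional ℂ (X ⧸ LinearMap.range (S : X →ₗ[ℂ] X)) ∧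
  IsClosed ((LinearMap.range (S : X →ₗ[ℂ] X) : Submodule ℂ X) : Set X)

/-- Weyl operator: Fredholm of index 0. -/
def IsWeylOp (S : X →L[ℂ] X) : Prop :=
  IsFredholmOp S ∧
  Module.finrank ℂ (LinearMap.ker (S : X →ₗ[ℂ] X)) = Module.finrank ℂ (X ⧸ LinearMap.range (S : X →ₗ[ℂ] X))

/-- Weyl spectrum. -/
def spW (T : X →L[ℂ] X) : Set ℂ := {l | ¬ IsWeylOp (T - l • 1)}

def HasFiniteAscent (S : X →L[ℂ] X) : Prop :=
  ∃ n : ℕ, LinearMap.ker ((S ^ n : X →L[ℂ] X) : X →ₗ[ℂ] X) = LinearMap.ker ((S ^ (n + 1) : X →L[ℂ] X) : X →ₗ[ℂ] X)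

def HasFiniteDescent (S : X →L[ℂ] X) : Prop :=
  ∃ n : ℕ, LinearMap.range ((S ^ n : X →L[ℂ] X) : X →ₗ[ℂ] X) = LinearMap.range ((S ^ (n + 1) : X →L[ℂ] X) : X →ₗ[ℂ] X)

/-- Ascent of an operator (junk value if infinite). -/
def ascent (S : X →L[ℂ] X) : ℕ :=
  sInf {n : ℕ | LinearMap.ker ((S ^ n : X →L[ℂ] X) : X →ₗ[ℂ] X) = LinearMap.ker ((S ^ (n + 1) : X →L[ℂ] X) : X →ₗ[ℂ] X)}

/-- Poles of the resolvent: spectral points where `T - λ` has finite ascent and descent. -/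
def poles (T : X →L[ℂ] X) : Set ℂ :=
  {l | l ∈ sp T ∧ HasFiniteAscent (T - l • 1) ∧ HasFiniteDescent (T - l • 1)}

/-- Poles of finite rank. -/
def poles0 (T : X →L[ℂ] X) : Set ℂ :=
  {l | l ∈ poles T ∧ FiniteDimensional ℂ (LinearMap.ker ((T - l • 1 : X →L[ℂ] X) : X →ₗ[ℂ] X))}

/-- Left poles: `λ ∈ σ_a(T)` with finite ascent `a = a(T-λ)` and `R((T-λ)^(a+1))` closed. -/
def leftPoles (T : X →L[ℂ] X) : Set ℂ :=
  {l | l ∈ spa T ∧ HasFiniteAscent (T - l • 1) ∧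
    IsClosed ((LinearMap.range (((T - l • 1) ^ (ascent (T - l • 1) + 1) : X →L[ℂ] X) : X →ₗ[ℂ] X) : Submodule ℂ X) : Set X)}

/-- Left poles of finite rank. -/
def leftPoles0 (T : X →L[ℂ] X) : Set ℂ :=
  {l | l ∈ leftPoles T ∧ FiniteDimensional ℂ (LinearMap.ker ((T - l • 1 : X →L[ℂ] X) : X →ₗ[ℂ] X))}

/-- A linear endomorphism of a normed space is Weyl (Fredholm of index 0). -/
def LMIsWeyl {V : Type*} [NormedAddCommGroup V] [Module ℂ V] (L : V →ₗ[ℂ] V) : Prop :=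
  FiniteDimensional ℂ (LinearMap.ker L) ∧
  FiniteDimensional ℂ (V ⧸ LinearMap.range L) ∧
  IsClosed ((LinearMap.range L : Submodule ℂ V) : Set V) ∧
  Module.finrank ℂ (LinearMap.ker L) = Module.finrank ℂ (V ⧸ LinearMap.range L)

lemma mapsTo_range_pow (S : X →L[ℂ] X) (n : ℕ) :
    ∀ x ∈ LinearMap.range ((S ^ n : X →L[ℂ] X) : X →ₗ[ℂ] X),
      S x ∈ LinearMap.range ((S ^ n : X →L[ℂ] X) : X →ₗ[ℂ] X) := by
  rintro x ⟨y, rfl⟩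
  exact ⟨S y, by
    have h : (S ^ n) * S = S * (S ^ n) := (Commute.refl S).pow_left n
    calc (S ^ n) (S y) = ((S ^ n) * S) y := rfl
    _ = (S * S ^ n) y := by rw [h]
    _ = S ((S ^ n) y) := rfl⟩

/-- B-Weyl operator: for some `n`, `R(S^n)` is closed and the restriction of `S` to
`R(S^n)` is a Weyl operator. -/
def IsBWeylOp (S : X →L[ℂ] X) : Prop :=
  ∃ n : ℕ, IsClosed ((LinearMap.range ((S ^ n : X →L[ℂ] X) : X →ₗ[ℂ] X) : Submodule ℂ X) : Set X) ∧
    LMIsWeyl ((S : X →ₗ[ℂ] X).restrict (mapsTo_range_pow S n))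

/-- B-Weyl spectrum. -/
def spBW (T : X →L[ℂ] X) : Set ℂ := {l | ¬ IsBWeylOp (T - l • 1)}

/-- Single-valued extension property at a point. -/
def HasSVEPAt (T : X →L[ℂ] X) (l : ℂ) : Prop :=
  ∀ U : Set ℂ, IsOpen U → l ∈ U → ∀ f : ℂ → X, AnalyticOnNhd ℂ f U →
    (∀ μ ∈ U, (T - μ • 1) (f μ) = 0) → ∀ μ ∈ U, f μ = 0

/-- Riesz operator: `R - μ` is Fredholm for every nonzero `μ`. -/
def IsRieszOp (R : X →L[ℂ] X) : Prop :=
  ∀ μ : ℂ, μ ≠ 0 → IsFredholmOp (R - μ • 1)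

/-- Property `(Z_{E_a})`. -/
def PropZEa (T : X →L[ℂ] X) : Prop := sp T \ spW T = Ea T

/-- Property `(Z_{Π_a})`. -/
def PropZPa (T : X →L[ℂ] X) : Prop := sp T \ spW T = leftPoles T

/-- Weyl's theorem. -/
def WeylThm (T : X →L[ℂ] X) : Prop := sp T \ spW T = E0 T

/-- Browder's theorem. -/
def BrowderThm (T : X →L[ℂ] X) : Prop := sp T \ spW T = poles0 T

/-- Property `(k)`. -/
def PropK (T : X →L[ℂ] X) : Prop := sp T \ spW T = Efull T

/-- Property `(gaw)`. -/
def PropGaw (T : X →L[ℂ] X) : Prop := sp T \ spBW T = Ea T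

/-- Property `(aw)`. -/
def PropAw (T : X →L[ℂ] X) : Prop := sp T \ spW T = Ea0 T

/-- Property `(Baw)`. -/
def PropBaw (T : X →L[ℂ] X) : Prop := sp T \ spBW T = Ea0 T

/-- Property `(gab)`. -/
def PropGab (T : X →L[ℂ] X) : Prop := sp T \ spBW T = leftPoles T

/-- Property `(ab)`. -/
def PropAb (T : X →L[ℂ] X) : Prop := sp T \ spW T = leftPoles0 T

end ZProps

end

/-!
A Weyl operator is an invertible operator plus a finite-rank, hence compact, one. Suppose
`T - λ` is Weyl and `λ` is isolated in `σ_a(T)`. For `ν` close to `λ`, `T - ν` is bounded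
below, so it is injective, and it differs from an invertible operator by a compact one. By the
Fredholm alternative, `T - ν` is then invertible. So `λ` is isolated in `σ(T)`. Under property
`(Z_{E_a})` this shows `E_a(T) ⊆ E(T)`. The reverse inclusion `E(T) ⊆ E_a(T)` always holds
because `σ_p(T) ⊆ σ_a(T) ⊆ σ(T)`. Everything else is rewriting.
-/

open Filter Topology

namespace LinearMap

variable {R V W : Type*} [Ring R] [AddCommGroup V] [Module R V] [AddCommGroup W] [Module R W]

theorem bijective_add_comp_of_isCompl_range {A : V →ₗ[R] W} {P : V →ₗ[R] ker A}
    (hP : ∀ x : ker A, P x = x) {J : ker A →ₗ[R] W} (hJ : Function.Injective J)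
    (hc : IsCompl (range A) (range J)) : Function.Bijective (A + J ∘ₗ P) := by
  constructor
  · rw [← ker_eq_bot, Submodule.eq_bot_iff]
    intro x hx
    have hAx : A x = -J (P x) := eq_neg_of_add_eq_zero_left hx
    have hJ0 : J (P x) = 0 := by
      refine (Submodule.disjoint_def.mp hc.disjoint) _ ⟨-x, ?_⟩ ⟨P x, rfl⟩
      rw [map_neg, hAx, neg_neg]
    have hxker : x ∈ ker A := by rw [mem_ker, hAx, hJ0, neg_zero]
    have hPx := hP ⟨x, hxker⟩
    rw [hJ.eq_iff.mp (hJ0.trans (map_zero J).symm)] at hPx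
    exact (congrArg Subtype.val hPx).symm
  · intro y
    have hy : y ∈ range A ⊔ range J := hc.sup_eq_top ▸ Submodule.mem_top
    obtain ⟨_, ⟨w, rfl⟩, _, ⟨k, rfl⟩, rfl⟩ := Submodule.mem_sup.mp hy
    refine ⟨w - P w + k, ?_⟩
    have hPx : P (w - P w + k) = k := by simp [hP]
    simp [hPx]

end LinearMap

section CompactPerturbation

variable {𝕜 E : Type*} [NontriviallyNormedField 𝕜] [NormedAddCommGroup E] [NormedSpace 𝕜 E]
  [CompleteSpace E]

theorem IsUnit.sub_isCompactOperator {S K : E →L[𝕜] E} (hS : IsUnit S)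
    (hK : IsCompactOperator K) (hinj : Function.Injective (S - K)) : IsUnit (S - K) := by
  obtain ⟨U, rfl⟩ := hS
  have hfactor : (U : E →L[𝕜] E) - K = U * (1 - ↑U⁻¹ * K) := by
    rw [mul_sub, mul_one, ← mul_assoc, Units.mul_inv, one_mul]
  rw [hfactor]
  refine U.isUnit.mul ?_
  have hUK : IsCompactOperator (↑U⁻¹ * K : E →L[𝕜] E) := hK.clm_comp _
  rcases hUK.hasEigenvalue_or_mem_resolventSet one_ne_zero with hev | hres
  · obtain ⟨x, hx⟩ := hev.exists_hasEigenvector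
    have hKx : K x = (U : E →L[𝕜] E) x := by
      have h := congrArg (U : E →L[𝕜] E) hx.apply_eq_smul
      rwa [ContinuousLinearMap.coe_coe, ← mul_apply_eq_comp, ← mul_assoc, Units.mul_inv,
        one_mul, one_smul] at h
    exact absurd (hinj (by simp [hKx] : (↑U - K) x = (↑U - K) 0)) hx.2
  · simpa [spectrum.mem_resolventSet_iff] using hres

end CompactPerturbation

namespace ZProps

theorem mem_iso_iff {A : Set ℂ} {l : ℂ} : l ∈ iso A ↔ l ∈ A ∧ ∀ᶠ μ in 𝓝[≠] l, μ ∉ A := by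
  simp only [iso, mem_ofPred_eq, eventually_nhdsWithin_iff, Metric.eventually_nhds_iff,
    dist_eq_norm]
  refine and_congr_right fun _ => exists_congr fun ε => and_congr_right fun _ => ?_
  constructor
  · intro h μ hμ hne hA
    exact (h μ hA hne).not_gt hμ
  · intro h μ hA hne
    exact not_lt.mp fun hμ => h hμ hne hA

theorem mem_iso_of_subset {A B : Set ℂ} {l : ℂ} (hBA : B ⊆ A) (hl : l ∈ B) (h : l ∈ iso A) :
    l ∈ iso B :=
  ⟨hl, h.2.imp fun _ ⟨hε, hsep⟩ => ⟨hε, fun μ hμ => hsep μ (hBA hμ)⟩⟩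

section Spectra

variable {X : Type*} [NormedAddCommGroup X] [NormedSpace ℂ X]

theorem notMem_sp_iff {T : X →L[ℂ] X} {l : ℂ} : l ∉ sp T ↔ IsUnit (T - l • 1) := by
  rw [sp, spectrum.notMem_iff, Algebra.algebraMap_eq_smul_one, ← IsUnit.neg_iff, neg_sub]

theorem notMem_spa_iff {T : X →L[ℂ] X} {l : ℂ} :
    l ∉ spa T ↔ ∃ K, AntilipschitzWith K (T - l • 1 : X →L[ℂ] X) := by
  rw [spa, mem_ofPred_eq, not_not, antilipschitzWith_iff_exists_mul_le_norm]

theorem injective_of_notMem_spa {T : X →L[ℂ] X} {l : ℂ} (hl : l ∉ spa T) :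
    Function.Injective (T - l • 1 : X →L[ℂ] X) :=
  let ⟨_, hK⟩ := notMem_spa_iff.mp hl
  hK.injective

theorem spp_subset_spa (T : X →L[ℂ] X) : spp T ⊆ spa T := by
  rintro l ⟨x, hx0, hx⟩
  by_contra hl
  refine hx0 (injective_of_notMem_spa hl ?_)
  simp [hx]

theorem spa_subset_sp (T : X →L[ℂ] X) : spa T ⊆ sp T := by
  intro l hl
  by_contra hsp
  rw [notMem_sp_iff] at hsp
  exact notMem_spa_iff.mpr ⟨_, (ContinuousLinearEquiv.ofUnit hsp.unit).antilipschitz⟩ hl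

theorem Efull_subset_Ea (T : X →L[ℂ] X) : Efull T ⊆ Ea T :=
  fun _ ⟨hiso, hp⟩ => ⟨mem_iso_of_subset (spa_subset_sp T) (spp_subset_spa T hp) hiso, hp⟩

variable [CompleteSpace X]

theorem IsWeylOp.exists_isCompactOperator_isUnit_add {A : X →L[ℂ] X} (hA : IsWeylOp A) :
    ∃ K : X →L[ℂ] X, IsCompactOperator K ∧ IsUnit (A + K) := by
  obtain ⟨⟨hker, hcoker, -⟩, hindex⟩ := hA
  obtain ⟨P, hP⟩ :=
    Submodule.ClosedComplemented.of_finiteDimensional (LinearMap.ker (A : X →ₗ[ℂ] X))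
  obtain ⟨C, hC⟩ := Submodule.exists_isCompl (LinearMap.range (A : X →ₗ[ℂ] X))
  let q := Submodule.quotientEquivOfIsCompl _ _ hC
  have : FiniteDimensional ℂ C := q.finiteDimensional
  let e := ContinuousLinearEquiv.ofFinrankEq (hindex.trans q.finrank_eq)
  let J : LinearMap.ker (A : X →ₗ[ℂ] X) →L[ℂ] X := C.subtypeL ∘L e
  refine ⟨J ∘L P, (isCompactOperator_of_locallyCompactSpace_rng J).comp_clm P, ?_⟩
  rw [ContinuousLinearMap.isUnit_iff_bijective]
  have hJ : LinearMap.range (J : LinearMap.ker (A : X →ₗ[ℂ] X) →ₗ[ℂ] X) = C := by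
    simp [J]
  exact LinearMap.bijective_add_comp_of_isCompl_range (A := (A : X →ₗ[ℂ] X)) (P := P) hP
    (J := (J : _ →ₗ[ℂ] X)) (Subtype.val_injective.comp e.injective) (hJ ▸ hC)

theorem mem_iso_sp_of_isWeylOp {T : X →L[ℂ] X} {l : ℂ} (hW : IsWeylOp (T - l • 1))
    (hiso : l ∈ iso (spa T)) (hsp : l ∈ sp T) : l ∈ iso (sp T) := by
  obtain ⟨K, hK, hS⟩ := hW.exists_isCompactOperator_isUnit_add
  have hunit : ∀ᶠ ν in 𝓝 l, IsUnit (T - l • 1 + K - (ν - l) • (1 : X →L[ℂ] X)) := by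
    have hcont : Continuous fun ν : ℂ => T - l • 1 + K - (ν - l) • (1 : X →L[ℂ] X) := by
      fun_prop
    exact hcont.continuousAt.eventually (Units.isOpen.mem_nhds (by simpa using hS))
  refine mem_iso_iff.mpr ⟨hsp, ?_⟩
  filter_upwards [nhdsWithin_le_nhds hunit, (mem_iso_iff.mp hiso).2] with ν hU hν
  have hT : T - ν • 1 = T - l • 1 + K - (ν - l) • (1 : X →L[ℂ] X) - K := by module
  rw [notMem_sp_iff, hT]
  exact hU.sub_isCompactOperator hK (hT ▸ injective_of_notMem_spa hν)

end Spectra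

end ZProps

open ZProps in
theorem stmt4_general {X : Type*} [NormedAddCommGroup X] [NormedSpace ℂ X] [CompleteSpace X]
    (T : X →L[ℂ] X) :
    PropZEa T ↔ PropK T ∧ Ea T = Efull T := by
  constructor
  · intro h
    have hEa : Ea T ⊆ Efull T := by
      intro l hl
      obtain ⟨hsp, hW⟩ : l ∈ sp T \ spW T := h ▸ hl
      exact ⟨mem_iso_sp_of_isWeylOp (not_not.mp hW) hl.1 hsp, hl.2⟩
    have hEq := hEa.antisymm (Efull_subset_Ea T)
    exact ⟨by rwa [PropK, ← hEq], hEq⟩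
  · rintro ⟨hk, he⟩
    rwa [PropZEa, he]

open ZProps in
theorem stmt4 {X : Type*} [NormedAddCommGroup X] [NormedSpace ℂ X] [CompleteSpace X]
    (hinf : ¬ FiniteDimensional ℂ X) (T : X →L[ℂ] X) :
    PropZEa T ↔ PropK T ∧ Ea T = Efull T :=
  stmt4_general T
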